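/- arXiv:2507.20791 — 4 statements merged into one kernel-verified Lean document; each statement's English description precedes it below -/
import Mathlib

section
/- If G is a group (or profinite group) such that every open subgroup of G has a permutable complement, then for every open normal subgroup N of G, the quotient G/N is a C-group. -/
open Pointwise

namespace Subgroup

variable {G Q : Type*} [Group G] [Group Q] {f : G →* Q} {H : Subgroup Q} {K : Subgroup G}

theorem coe_mul_map_eq_univ (hf : Function.Surjective f)
    (hHK : (H.comap f : Set G) * (K : Set G) = Set.univ) :
    (H : Set Q) * (K.map f : Set Q) = Set.univ := by
  rw [coe_map, ← Set.image_preimage_eq (H : Set Q) hf, ← Set.image_mul, ← coe_comap, hHK,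
    Set.image_univ_of_surjective hf]

theorem inf_map_eq_bot (hHK : H.comap f ⊓ K = ⊥) : H ⊓ K.map f = ⊥ := by
  rw [eq_bot_iff]
  rintro _ ⟨hkH, k, hk, rfl⟩
  have hk1 : k ∈ H.comap f ⊓ K := ⟨hkH, hk⟩
  rw [hHK, mem_bot] at hk1
  simp [hk1]

end Subgroup

theorem stmt8_general {G : Type*} [Group G] [TopologicalSpace G] [IsTopologicalGroup G]
    (h : ∀ H : Subgroup G, IsOpen (H : Set G) → ∃ K : Subgroup G,
      (H : Set G) * (K : Set G) = Set.univ ∧ H ⊓ K = ⊥) :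
    ∀ (N : Subgroup G) [N.Normal], IsOpen (N : Set G) →
      ∀ H : Subgroup (G ⧸ N), ∃ K : Subgroup (G ⧸ N),
        (H : Set (G ⧸ N)) * (K : Set (G ⧸ N)) = Set.univ ∧ H ⊓ K = ⊥ := by
  intro N _ hN H
  obtain ⟨K, hmul, hinf⟩ :=
    h (H.comap (QuotientGroup.mk' N)) (Subgroup.isOpen_mono (QuotientGroup.le_comap_mk' N H) hN)
  exact ⟨K.map (QuotientGroup.mk' N), Subgroup.coe_mul_map_eq_univ
    (QuotientGroup.mk'_surjective N) hmul, Subgroup.inf_map_eq_bot hinf⟩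

/-- If every open subgroup of a profinite group `G` has a permutable complement, then
`G/N` is a C-group for every open normal subgroup `N` of `G`. -/
theorem stmt8 {G : Type*} [Group G] [TopologicalSpace G] [IsTopologicalGroup G]
    [CompactSpace G] [T2Space G] [TotallyDisconnectedSpace G]
    (h : ∀ H : Subgroup G, IsOpen (H : Set G) → ∃ K : Subgroup G,
      (H : Set G) * (K : Set G) = Set.univ ∧ H ⊓ K = ⊥) :
    ∀ (N : Subgroup G) [N.Normal], IsOpen (N : Set G) →
      ∀ H : Subgroup (G ⧸ N), ∃ K : Subgroup (G ⧸ N),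
        (H : Set (G ⧸ N)) * (K : Set (G ⧸ N)) = Set.univ ∧ H ⊓ K = ⊥ :=
  stmt8_general h
end

section
/- Let G be a profinite-C group and A an abelian closed normal subgroup of G. Then for every closed subgroup B of A there exists a closed subgroup L of A, normal in G, such that A = B × L (internally: A = BL and B ∩ L = 1). -/
/-!
Let `K` be a closed complement of `B` in `G` and take `L = K ∩ A`. Since `B ≤ A`, Dedekind's
modular law gives `B L = B K ∩ A = A`. The subgroup `L` is normalized by `K` (as `A` is normal)
and by `B` (which centralizes the abelian group `A`), hence by `B K = G`.
-/

open Pointwise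

namespace Subgroup

variable {G : Type*} [Group G]

theorem normal_of_mul_eq_univ_of_le_normalizer {N B K : Subgroup G}
    (hBK : (B : Set G) * (K : Set G) = Set.univ) (hB : B ≤ normalizer (N : Set G))
    (hK : K ≤ normalizer (N : Set G)) : N.Normal :=
  normalizer_eq_top_iff.mp <| eq_top_iff.mpr fun g _ => by
    obtain ⟨b, hb, k, hk, rfl⟩ : g ∈ (B : Set G) * K := hBK ▸ Set.mem_univ g
    exact mul_mem (hB hb) (hK hk)

theorem normal_inf_of_mul_eq_univ {A B K : Subgroup G} [A.Normal]
    (hBA : B ≤ centralizer A) (hBK : (B : Set G) * (K : Set G) = Set.univ) : (K ⊓ A).Normal :=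
  normal_of_mul_eq_univ_of_le_normalizer hBK
    (hBA.trans <| (centralizer_le fun _ h => h.2).trans (centralizer_le_normalizer _))
    ((le_inf le_normalizer le_normalizer_of_normal).trans inf_normalizer_le_normalizer_inf)

end Subgroup

open Subgroup in
theorem stmt10_general {G : Type*} [Group G] [TopologicalSpace G]
    (hC : ∀ H : Subgroup G, IsClosed (H : Set G) → ∃ K : Subgroup G,
      IsClosed (K : Set G) ∧ (H : Set G) * (K : Set G) = Set.univ ∧ H ⊓ K = ⊥)
    (A : Subgroup G) [A.Normal] (hAc : IsClosed (A : Set G))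
    (hAab : ∀ x y : G, x ∈ A → y ∈ A → x * y = y * x)
    (B : Subgroup G) (hBA : B ≤ A) (hBc : IsClosed (B : Set G)) :
    ∃ L : Subgroup G, L ≤ A ∧ IsClosed (L : Set G) ∧ L.Normal ∧
      (B : Set G) * (L : Set G) = (A : Set G) ∧ B ⊓ L = ⊥ := by
  obtain ⟨K, hKc, hBK, hBK_bot⟩ := hC B hBc
  have hB_centralizes : B ≤ centralizer A := fun b hb a ha => hAab a b ha (hBA hb)
  refine ⟨K ⊓ A, inf_le_right, hKc.inter hAc, normal_inf_of_mul_eq_univ hB_centralizes hBK, ?_,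
    eq_bot_mono (inf_le_inf_left B inf_le_left) hBK_bot⟩
  rw [mul_inf_assoc B K A hBA, hBK, Set.univ_inter]

/-- In a profinite-C group `G`, if `A` is an abelian closed normal subgroup and `B` a
closed subgroup of `A`, then `A = B × L` for some closed subgroup `L` of `A` normal
in `G`. -/
theorem stmt10 {G : Type*} [Group G] [TopologicalSpace G] [IsTopologicalGroup G]
    [CompactSpace G] [T2Space G] [TotallyDisconnectedSpace G]
    (hC : ∀ H : Subgroup G, IsClosed (H : Set G) → ∃ K : Subgroup G,
      IsClosed (K : Set G) ∧ (H : Set G) * (K : Set G) = Set.univ ∧ H ⊓ K = ⊥)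
    (A : Subgroup G) [A.Normal] (hAc : IsClosed (A : Set G))
    (hAab : ∀ x y : G, x ∈ A → y ∈ A → x * y = y * x)
    (B : Subgroup G) (hBA : B ≤ A) (hBc : IsClosed (B : Set G)) :
    ∃ L : Subgroup G, L ≤ A ∧ IsClosed (L : Set G) ∧ L.Normal ∧
      (B : Set G) * (L : Set G) = (A : Set G) ∧ B ⊓ L = ⊥ :=
  stmt10_general hC A hAc hAab B hBA hBc
end

section
/- Let G be a profinite-C group and A a minimal closed normal subgroup of G (i.e., A ≠ 1 and the only closed subgroups of A normal in G are 1 and A). Then A is cyclic of prime order. -/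
/-!
A minimal closed normal subgroup `A` of a profinite group meets some open normal subgroup
trivially, so it is finite. Let `p` be the smallest prime dividing `|A|`, `x ∈ A` of order `p`,
and `K` a closed complement of `⟨x⟩`. Then `K ∩ A` is a complement of `⟨x⟩` in `A`, so it has
index `p` in `A` and is therefore normal in `A`; being also normalized by `K` and `G = AK`, it is
normal in `G`. It does not contain `x`, so minimality forces `K ∩ A = 1` and `|A| = p`.
-/

namespace Subgroup

variable {G : Type*} [Group G]

theorem normal_inf_of_sup_eq_top {A K : Subgroup G} [A.Normal] [(K.subgroupOf A).Normal]
    (h : A ⊔ K = ⊤) : (K ⊓ A).Normal := by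
  rw [← normalizer_eq_top_iff, eq_top_iff, ← h]
  exact sup_le (normal_subgroupOf_iff_le_normalizer_inf.mp ‹_›)
    ((le_inf le_normalizer le_normalizer_of_normal).trans inf_normalizer_le_normalizer_inf)

theorem IsComplement'.subgroupOf {H K A : Subgroup G} (h : IsComplement' H K) (hHA : H ≤ A) :
    IsComplement' (H.subgroupOf A) (K.subgroupOf A) := by
  refine isComplement'_of_disjoint_and_mul_eq_univ ?_ (Set.eq_univ_of_forall fun a => ?_)
  · exact disjoint_def.mpr fun hx hy => Subtype.ext (disjoint_def.mp h.disjoint hx hy)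
  · obtain ⟨⟨x, y⟩, hxy : (x : G) * y = a⟩ := h.2 a
    have hyA : (y : G) ∈ A := (A.mul_mem_cancel_left (hHA x.2)).mp (hxy ▸ a.2)
    exact ⟨⟨x, hHA x.2⟩, x.2, ⟨y, hyA⟩, y.2, Subtype.ext hxy⟩

end Subgroup

section Profinite

open Subgroup

variable {G : Type*} [Group G] [TopologicalSpace G] [IsTopologicalGroup G] [CompactSpace G]

theorem finite_of_disjoint_openNormalSubgroup {A : Subgroup G} {N : OpenNormalSubgroup G}
    (h : Disjoint A N.toSubgroup) : Finite A := by
  refine Finite.of_injective ((QuotientGroup.mk' N.toSubgroup).comp A.subtype) ?_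
  rw [← MonoidHom.ker_eq_bot_iff, ← MonoidHom.comap_ker, QuotientGroup.ker_mk']
  exact subgroupOf_eq_bot.mpr h.symm

theorem finite_of_minimal_closed_normal [T1Space G] [TotallyDisconnectedSpace G]
    {A : Subgroup G} [A.Normal] (hAc : IsClosed (A : Set G))
    (hmin : ∀ B : Subgroup G, B ≤ A → IsClosed (B : Set G) → B.Normal → B = ⊥ ∨ B = A) :
    Finite A := by
  obtain rfl | ⟨a, haA, ha⟩ := A.bot_or_exists_ne_one
  · infer_instance
  obtain ⟨N, hN⟩ := ProfiniteGrp.exist_openNormalSubgroup_sub_open_nhds_of_one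
    isOpen_compl_singleton (Set.mem_compl_singleton_iff.mpr ha.symm)
  rcases hmin (A ⊓ N.toSubgroup) inf_le_left (hAc.inter N.isClosed) inferInstance with h | h
  · exact finite_of_disjoint_openNormalSubgroup (disjoint_iff.mpr h)
  · exact (hN (inf_eq_left.mp h haA) rfl).elim

end Profinite

open Pointwise

/-- A minimal closed normal subgroup of a profinite-C group is cyclic of prime order. -/
theorem stmt11 {G : Type*} [Group G] [TopologicalSpace G] [IsTopologicalGroup G]
    [CompactSpace G] [T2Space G] [TotallyDisconnectedSpace G]
    (hC : ∀ H : Subgroup G, IsClosed (H : Set G) → ∃ K : Subgroup G,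
      IsClosed (K : Set G) ∧ (H : Set G) * (K : Set G) = Set.univ ∧ H ⊓ K = ⊥)
    (A : Subgroup G) [A.Normal] (hAc : IsClosed (A : Set G)) (hA : A ≠ ⊥)
    (hmin : ∀ B : Subgroup G, B ≤ A → IsClosed (B : Set G) → B.Normal → B = ⊥ ∨ B = A) :
    IsCyclic A ∧ ∃ p : ℕ, p.Prime ∧ Nat.card A = p := by
  have := finite_of_minimal_closed_normal hAc hmin
  set p := (Nat.card A).minFac
  have hp : p.Prime := Nat.minFac_prime (mt Subgroup.card_eq_one.mp hA)
  have := Fact.mk hp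
  obtain ⟨x, hx⟩ := exists_prime_orderOf_dvd_card' p (Nat.minFac_dvd _)
  set H := (Subgroup.zpowers x).map A.subtype with hH
  have hHA : H ≤ A := Subgroup.map_subtype_le _
  obtain ⟨K, hKc, hHK, hHKbot⟩ := hC H ((Set.toFinite (A : Set G)).subset hHA).isClosed
  have hcompl := Subgroup.isComplement'_of_disjoint_and_mul_eq_univ (disjoint_iff.mpr hHKbot) hHK
  have hindex : (K.subgroupOf A).index = p := by
    rw [(hcompl.subgroupOf hHA).index_eq_card, hH, Subgroup.subgroupOf,
      Subgroup.comap_map_eq_self_of_injective A.subtype_injective,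
      Nat.card_zpowers, hx]
  have := Subgroup.normal_of_index_eq_minFac_card hindex
  have hAK : A ⊔ K = ⊤ := top_le_iff.mp (hcompl.sup_eq_top ▸ sup_le_sup_right hHA K)
  have hcard : Nat.card A = p := by
    rcases hmin (K ⊓ A) inf_le_right (hKc.inter hAc) (Subgroup.normal_inf_of_sup_eq_top hAK)
      with h | h
    · rwa [Subgroup.subgroupOf_eq_bot.mpr (disjoint_iff.mpr h), Subgroup.index_bot] at hindex
    · rw [Subgroup.subgroupOf_eq_top.mpr (inf_eq_right.mp h), Subgroup.index_top] at hindex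
      exact absurd hindex.symm hp.ne_one
  exact ⟨isCyclic_of_prime_card hcard, p, hp, hcard⟩
end

section
/- Let G be a profinite-C group and A a nontrivial abelian closed normal subgroup of G. Then A contains a minimal closed normal subgroup of G, and such a subgroup has prime order. -/
open Pointwise

/-!
Pick `x ≠ 1` in `A` and an open subgroup `N` not containing `x`. By Zorn's lemma and compactness
there is a closed normal subgroup `B ≤ A` of `G`, minimal with `B ≰ N`. Because `B` is abelian,
for a closed subgroup `H ≤ B` with closed complement `K`, the subgroup `K ⊓ B` is again normal
in `G`, and `B = H ⊔ (K ⊓ B)`. With `H = B ⊓ N` this gives `B ⊓ N = ⊥`, so `B` is finite and a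
minimal closed normal subgroup; with `H = ⟨g⟩` for `g ∈ B` of prime order it gives `B = ⟨g⟩`.
-/

namespace Subgroup

variable {G : Type*} [Group G]

/-- Conjugation by `h * k` agrees with conjugation by `k` on `B`, since `h` centralizes `B`. -/
theorem normal_inf_of_mul_eq_univ_s12 {H K B : Subgroup G} [hB : B.Normal]
    (hHB : H ≤ centralizer B) (hHK : (H : Set G) * (K : Set G) = Set.univ) : (K ⊓ B).Normal := by
  refine ⟨fun n hn g => ?_⟩
  obtain ⟨h, hh, k, hk, rfl⟩ : g ∈ (H : Set G) * (K : Set G) := hHK ▸ Set.mem_univ g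
  have hkn : k * n * k⁻¹ ∈ K ⊓ B :=
    ⟨K.mul_mem (K.mul_mem hk hn.1) (K.inv_mem hk), hB.conj_mem n hn.2 k⟩
  have hcomm : k * n * k⁻¹ * h = h * (k * n * k⁻¹) := mem_centralizer_iff.1 (hHB hh) _ hkn.2
  have hconj : h * k * n * (h * k)⁻¹ = k * n * k⁻¹ := by
    rw [mul_inv_rev, ← mul_inv_eq_iff_eq_mul.2 hcomm.symm]
    group
  exact hconj ▸ hkn

theorem le_sup_inf_of_mul_eq_univ {H K B : Subgroup G} (hHB : H ≤ B)
    (hHK : (H : Set G) * (K : Set G) = Set.univ) : B ≤ H ⊔ K ⊓ B := by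
  intro b hb
  obtain ⟨h, hh, k, hk, rfl⟩ : b ∈ (H : Set G) * (K : Set G) := hHK ▸ Set.mem_univ b
  have hkB : k ∈ B := by simpa using B.mul_mem (B.inv_mem (hHB hh)) hb
  exact mul_mem (mem_sup_left hh) (mem_sup_right ⟨hk, hkB⟩)

theorem prime_card_of_forall_le_eq_bot_or_eq {B : Subgroup G} [Finite B] (hB : B ≠ ⊥)
    (hBmin : ∀ H ≤ B, H = ⊥ ∨ H = B) : (Nat.card B).Prime := by
  obtain ⟨p, hp, hpB⟩ := Nat.exists_prime_and_dvd (mt B.eq_bot_of_card_eq hB)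
  have : Fact p.Prime := ⟨hp⟩
  obtain ⟨b, hb⟩ := exists_prime_orderOf_dvd_card' (G := B) p hpB
  have hbp : orderOf (b : G) = p := by rw [orderOf_submonoid, hb]
  have hzpowers : zpowers (b : G) = B := by
    refine (hBmin _ (zpowers_le.2 b.2)).resolve_left fun h => hp.one_lt.ne' ?_
    rw [← hbp, orderOf_eq_one_iff, ← mem_bot, ← h]
    exact mem_zpowers _
  rwa [← hzpowers, Nat.card_zpowers, hbp]

variable [TopologicalSpace G]

theorem eq_bot_or_eq_of_isClosed_le {B H K : Subgroup G} [B.Normal]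
    (hBc : IsClosed (B : Set G)) (hBcomm : B ≤ centralizer B)
    (hBmin : ∀ C : Subgroup G, C ≤ B → IsClosed (C : Set G) → C.Normal → C = ⊥ ∨ C = B)
    (hHB : H ≤ B) (hKc : IsClosed (K : Set G)) (hHK : (H : Set G) * (K : Set G) = Set.univ)
    (hHK' : H ⊓ K = ⊥) : H = ⊥ ∨ H = B := by
  rcases hBmin (K ⊓ B) inf_le_right (hKc.inter hBc)
      (normal_inf_of_mul_eq_univ_s12 (hHB.trans hBcomm) hHK) with h | h
  · refine Or.inr (le_antisymm hHB ?_)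
    simpa [h] using le_sup_inf_of_mul_eq_univ hHB hHK
  · refine Or.inl (eq_bot_iff.2 (hHK' ▸ le_inf le_rfl ?_))
    exact hHB.trans (h.symm.le.trans inf_le_left)

theorem inf_eq_bot_of_minimal_not_le {A N B K : Subgroup G}
    (hB : Minimal (fun D : Subgroup G => IsClosed (D : Set G) ∧ D.Normal ∧ D ≤ A ∧ ¬ D ≤ N) B)
    (hBcomm : B ≤ centralizer B) (hKc : IsClosed (K : Set G))
    (hK : ((B ⊓ N : Subgroup G) : Set G) * (K : Set G) = Set.univ) (hK' : B ⊓ N ⊓ K = ⊥) :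
    B ⊓ N = ⊥ := by
  obtain ⟨hBc, hBn, hBA, hBN⟩ := hB.prop
  have hKBn : (K ⊓ B).Normal := normal_inf_of_mul_eq_univ_s12 (inf_le_left.trans hBcomm) hK
  have hKBN : ¬ K ⊓ B ≤ N := fun hle =>
    hBN ((le_sup_inf_of_mul_eq_univ inf_le_left hK).trans (sup_le inf_le_right hle))
  have hBK : B ≤ K :=
    (hB.2 ⟨hKc.inter hBc, hKBn, inf_le_right.trans hBA, hKBN⟩ inf_le_right).trans inf_le_left
  exact eq_bot_iff.2 (hK' ▸ le_inf le_rfl (inf_le_left.trans hBK))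

theorem eq_bot_or_eq_of_minimal_not_le {A N B : Subgroup G}
    (hB : Minimal (fun D : Subgroup G => IsClosed (D : Set G) ∧ D.Normal ∧ D ≤ A ∧ ¬ D ≤ N) B)
    (hBN : B ⊓ N = ⊥) (C : Subgroup G) (hCB : C ≤ B) (hCc : IsClosed (C : Set G)) (hCn : C.Normal) :
    C = ⊥ ∨ C = B := by
  refine or_iff_not_imp_left.2 fun hC => hB.eq_of_le ⟨hCc, hCn, hCB.trans hB.prop.2.2.1, ?_⟩ hCB
  exact fun hCN => hC (eq_bot_iff.2 (hBN ▸ le_inf hCB hCN))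

variable [CompactSpace G]

theorem sInf_not_le_of_isChain {N : Subgroup G} (hN : IsOpen (N : Set G))
    {c : Set (Subgroup G)} (hc : IsChain (· ≤ ·) c) (hne : c.Nonempty)
    (hcl : ∀ D ∈ c, IsClosed (D : Set G)) (hnot : ∀ D ∈ c, ¬ D ≤ N) : ¬ sInf c ≤ N := by
  have : Nonempty c := hne.to_subtype
  have hclosed (D : c) : IsClosed ((D : Set G) \ N) := (hcl D D.2).sdiff hN
  have hdir : Directed (· ⊇ ·) fun D : c => (D : Set G) \ N := by
    rintro D₁ D₂
    rcases hc.total D₁.2 D₂.2 with h | h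
    · exact ⟨D₁, subset_rfl, Set.sdiff_subset_sdiff_left h⟩
    · exact ⟨D₂, Set.sdiff_subset_sdiff_left h, subset_rfl⟩
  obtain ⟨g, hg⟩ := IsCompact.nonempty_iInter_of_directed_nonempty_isCompact_isClosed _ hdir
    (fun D => Set.not_subset.1 (hnot D D.2)) (fun D => (hclosed D).isCompact) hclosed
  simp only [Set.mem_iInter, Set.mem_sdiff, SetLike.mem_coe, Subtype.forall] at hg
  obtain ⟨D, hD⟩ := hne
  exact fun hle => (hg D hD).2 (hle (mem_sInf.2 fun D hD => (hg D hD).1))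

theorem exists_minimal_isClosed_normal_not_le {A N : Subgroup G} [A.Normal]
    (hAc : IsClosed (A : Set G)) (hN : IsOpen (N : Set G)) (hAN : ¬ A ≤ N) :
    ∃ B, Minimal (fun D : Subgroup G => IsClosed (D : Set G) ∧ D.Normal ∧ D ≤ A ∧ ¬ D ≤ N) B := by
  set P := fun D : Subgroup G => IsClosed (D : Set G) ∧ D.Normal ∧ D ≤ A ∧ ¬ D ≤ N
  have hchain (c : Set (Subgroup G)) (hcP : ∀ D ∈ c, P D) (hc : IsChain (· ≤ ·) c)
      (hne : c.Nonempty) : P (sInf c) := by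
    obtain ⟨D, hD⟩ := hne
    refine ⟨?_, ?_, (sInf_le hD).trans (hcP D hD).2.2.1,
      sInf_not_le_of_isChain hN hc ⟨D, hD⟩ (fun D hD => (hcP D hD).1) fun D hD => (hcP D hD).2.2.2⟩
    · rw [coe_sInf]
      exact isClosed_biInter fun D hD => (hcP D hD).1
    · exact ⟨fun n hn g => mem_sInf.2 fun D hD => (hcP D hD).2.1.conj_mem n (mem_sInf.1 hn D hD) g⟩
  obtain ⟨B, -, hB⟩ := zorn_le_nonempty₀ (α := (Subgroup G)ᵒᵈ) (OrderDual.ofDual ⁻¹' {D | P D})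
    (fun c hcP hc D hD => ⟨_, hchain (OrderDual.toDual ⁻¹' c) (fun _ hD => hcP hD) hc.symm ⟨D, hD⟩,
      fun _ hD => sInf_le (α := Subgroup G) hD⟩)
    (OrderDual.toDual A) (show P A from ⟨hAc, inferInstance, le_rfl, hAN⟩)
  exact ⟨B.ofDual, hB⟩

variable [IsTopologicalGroup G]

theorem finite_of_inf_eq_bot_of_isOpen {H N : Subgroup G} (hN : IsOpen (N : Set G))
    (h : H ⊓ N = ⊥) : Finite H := by
  have : Finite (G ⧸ N) := N.quotient_finite_of_isOpen hN
  refine Finite.of_injective (fun x : H => (x : G ⧸ N)) fun a b hab => Subtype.ext ?_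
  have hmem : (a : G)⁻¹ * b ∈ H ⊓ N := ⟨H.mul_mem (H.inv_mem a.2) b.2, QuotientGroup.eq.1 hab⟩
  rw [h, mem_bot] at hmem
  exact inv_mul_eq_one.1 hmem

end Subgroup

/-- A nontrivial abelian closed normal subgroup of a profinite-C group contains a
minimal closed normal subgroup of `G`, and such a subgroup has prime order. -/
theorem stmt12 {G : Type*} [Group G] [TopologicalSpace G] [IsTopologicalGroup G]
    [CompactSpace G] [T2Space G] [TotallyDisconnectedSpace G]
    (hC : ∀ H : Subgroup G, IsClosed (H : Set G) → ∃ K : Subgroup G,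
      IsClosed (K : Set G) ∧ (H : Set G) * (K : Set G) = Set.univ ∧ H ⊓ K = ⊥)
    (A : Subgroup G) [A.Normal] (hAc : IsClosed (A : Set G)) (hA : A ≠ ⊥)
    (hAab : ∀ x y : G, x ∈ A → y ∈ A → x * y = y * x) :
    ∃ B : Subgroup G, B ≤ A ∧ B ≠ ⊥ ∧ IsClosed (B : Set G) ∧ B.Normal ∧
      (∀ C : Subgroup G, C ≤ B → IsClosed (C : Set G) → C.Normal → C = ⊥ ∨ C = B) ∧
      ∃ p : ℕ, p.Prime ∧ Nat.card B = p := by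
  obtain ⟨x, hxA, hx1⟩ := A.bot_or_exists_ne_one.resolve_left hA
  obtain ⟨N, hNx⟩ := ProfiniteGrp.exist_openNormalSubgroup_sub_open_nhds_of_one
    isOpen_compl_singleton (Set.mem_compl_singleton_iff.2 hx1.symm)
  obtain ⟨B, hB⟩ := Subgroup.exists_minimal_isClosed_normal_not_le hAc N.isOpen
    (fun h => hNx (h hxA) rfl)
  obtain ⟨hBc, hBn, hBA, hBN⟩ := hB.prop
  have hBcomm : B ≤ Subgroup.centralizer B := fun a ha =>
    Subgroup.mem_centralizer_iff.2 fun b hb => hAab b a (hBA hb) (hBA ha)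
  obtain ⟨K, hKc, hK, hK'⟩ := hC (B ⊓ N.toSubgroup) (hBc.inter N.isClosed)
  have hBNbot := Subgroup.inf_eq_bot_of_minimal_not_le hB hBcomm hKc hK hK'
  have hBmin := Subgroup.eq_bot_or_eq_of_minimal_not_le hB hBNbot
  have hBfin : Finite B := Subgroup.finite_of_inf_eq_bot_of_isOpen N.isOpen hBNbot
  have hBne : B ≠ ⊥ := fun h => hBN (h ▸ bot_le)
  refine ⟨B, hBA, hBne, hBc, hBn, hBmin, _,
    Subgroup.prime_card_of_forall_le_eq_bot_or_eq hBne fun H hHB => ?_, rfl⟩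
  have hHc : IsClosed (H : Set G) := ((Set.toFinite (B : Set G)).subset hHB).isClosed
  obtain ⟨L, hLc, hL, hL'⟩ := hC H hHc
  exact Subgroup.eq_bot_or_eq_of_isClosed_le hBc hBcomm hBmin hHB hLc hL hL'
end
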